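/- For a positive integer m, reals b > 0 and Ω ≥ 0, with β = 1/(2b), c = Ω/(2b(2bm+Ω)), ζ(z) = (2bm/(2bm+Ω))^m β (−1)^z (1−m)_z c^z/(z!)², the function f(x) = Σ_{z=0}^{m−1} ζ(z) x^z e^{−(β−c)x} integrates to 1 over [0, ∞), i.e., Σ_{z=0}^{m−1} ζ(z) z!/(β−c)^{z+1} = 1. -/

import Mathlib

open Real Finset

/-! Since `(-1)^z (1-m)_z / z! = C(m-1, z)`, the sum is the binomial expansion
`A (β/(β-c)) (1 + c/(β-c))^(m-1) = A (β/(β-c))^m`, where `A = (2bm/(2bm+Ω))^m`.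
Here `β - c = m/(2bm+Ω)`, so `β/(β-c) = (2bm+Ω)/(2bm)` and the product is `1`. -/

theorem neg_one_pow_mul_ascPochhammer_eval_neg_natCast_div_factorial {K : Type*} [Field K]
    [CharZero K] (n z : ℕ) :
    (-1) ^ z * (ascPochhammer K z).eval (-(n : K)) / z.factorial = n.choose z := by
  rw [ascPochhammer_eval_neg_eq_descPochhammer, ← mul_assoc, ← pow_add, ← two_mul, pow_mul,
    neg_one_sq, one_pow, one_mul, ← Nat.cast_choose_eq_descPochhammer_div]

theorem sum_ascPochhammer_eval_neg_mul_pow_div_factorial {K : Type*} [Field K] [CharZero K]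
    (n : ℕ) (x : K) :
    ∑ z ∈ range (n + 1), (-1) ^ z * (ascPochhammer K z).eval (-(n : K)) * x ^ z / z.factorial =
      (x + 1) ^ n := by
  rw [add_pow]
  refine sum_congr rfl fun z _ => ?_
  rw [one_pow, mul_one, mul_comm _ (x ^ z), mul_div_assoc,
    neg_one_pow_mul_ascPochhammer_eval_neg_natCast_div_factorial]

theorem sum_ascPochhammer_one_sub_mul_div_pow_succ {K : Type*} [Field K] [CharZero K]
    (A β c : K) {m : ℕ} (hm : m ≠ 0) (hβc : β - c ≠ 0) :
    ∑ z ∈ range m,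
        (A * β * (-1) ^ z * (ascPochhammer K z).eval (1 - (m : K)) * c ^ z /
            (z.factorial : K) ^ 2) * z.factorial / (β - c) ^ (z + 1) =
      A * (β / (β - c)) ^ m := by
  obtain ⟨n, rfl⟩ := Nat.exists_eq_succ_of_ne_zero hm
  have hterm : ∀ z ∈ range (n + 1),
      (A * β * (-1) ^ z * (ascPochhammer K z).eval (1 - ((n + 1 : ℕ) : K)) * c ^ z /
          (z.factorial : K) ^ 2) * z.factorial / (β - c) ^ (z + 1) =
        A * (β / (β - c)) * ((-1) ^ z * (ascPochhammer K z).eval (-(n : K)) *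
          (c / (β - c)) ^ z / z.factorial) := by
    intro z _
    have hz : (z.factorial : K) ≠ 0 := Nat.cast_ne_zero.mpr z.factorial_ne_zero
    rw [Nat.cast_succ, sub_add_cancel_right, div_pow, pow_succ]
    field_simp
    ring
  have hβ : c / (β - c) + 1 = β / (β - c) := by field_simp; ring
  rw [sum_congr rfl hterm, ← mul_sum, sum_ascPochhammer_eval_neg_mul_pow_div_factorial, hβ,
    mul_assoc, ← pow_succ']

/-- Normalization of the closed-form Shadowed-Rician power PDF for integer `m`:
`Σ_{z=0}^{m−1} ζ(z) z!/(β−c)^{z+1} = 1` with the specific parameters `β`, `c`, `ζ`. -/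
theorem shadowed_rician_normalized (b Ω : ℝ) (m : ℕ) (hb : 0 < b) (hm : 1 ≤ m)
    (hΩ : 0 ≤ Ω) :
    ∑ z ∈ range m,
        ((2 * b * (m : ℝ) / (2 * b * (m : ℝ) + Ω)) ^ m * (1 / (2 * b)) * (-1) ^ z *
            ((ascPochhammer ℝ z).eval (1 - (m : ℝ))) *
            (Ω / (2 * b * (2 * b * (m : ℝ) + Ω))) ^ z / ((Nat.factorial z : ℝ)) ^ 2) *
          (Nat.factorial z : ℝ) /
          (1 / (2 * b) - Ω / (2 * b * (2 * b * (m : ℝ) + Ω))) ^ (z + 1) = 1 := by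
  have hm₀ : (0 : ℝ) < m := by exact_mod_cast hm
  have hS : 0 < 2 * b * m + Ω := by positivity
  have hβc : 1 / (2 * b) - Ω / (2 * b * (2 * b * m + Ω)) = m / (2 * b * m + Ω) := by
    field_simp
    ring
  have hratio : (1 / (2 * b)) / (m / (2 * b * m + Ω)) = (2 * b * m / (2 * b * m + Ω))⁻¹ := by
    field_simp
  rw [sum_ascPochhammer_one_sub_mul_div_pow_succ _ _ _ (by omega) (by rw [hβc]; positivity),
    hβc, hratio, inv_pow, mul_inv_cancel₀ (by positivity)]
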